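/- arXiv:1103.4438 — 7 statements merged into one kernel-verified Lean document; each statement's English description precedes it below -/
import Mathlib

section
/- Let m ≥ 1, let a_1,…,a_m be reals, let F be the associated m×m companion-form matrix, and let δ, V, W ≥ 0. Let a = (|a_1|,…,|a_m|)ᵀ and let L_u be the m×m matrix with (L_u)_{ij} = 1 if i ≤ j and 0 otherwise. Define Δ_∞ = (δ+V)·L_u a + W·L_u 𝟙_m. Then Δ_∞ is a fixed point of the combined measurement-and-time update: if Δ' ∈ ℝ^m is the vector that agrees with Δ_∞ in components 2,…,m and has first component δ+V, then Δ_∞ = F̄ Δ' + W 𝟙_m. (Explicitly, Δ_∞^{(i)} = (δ+V)·Σ_{j=i}^m |a_j| + (m−i+1)W for each 1 ≤ i ≤ m.) -/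
open Matrix

/-- The `m × m` companion-form matrix of the reals `a 0, …, a (m-1)`:
first column `(-a 0, …, -a (m-1))ᵀ`, ones on the superdiagonal, zeros elsewhere. -/
def companionForm (m : ℕ) (a : Fin m → ℝ) : Matrix (Fin m) (Fin m) ℝ :=
  Matrix.of fun i j =>
    (if (j : ℕ) = 0 then -a i else 0) + (if (j : ℕ) = (i : ℕ) + 1 then 1 else 0)

/-- The entrywise absolute value of a real matrix. -/
def entrywiseAbs {m : ℕ} (A : Matrix (Fin m) (Fin m) ℝ) : Matrix (Fin m) (Fin m) ℝ :=
  Matrix.of fun i j => |A i j|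

/-- The upper-triangular all-ones matrix `L_u`, with `(L_u)_{ij} = 1` iff `i ≤ j`. -/
def upperOnes (m : ℕ) : Matrix (Fin m) (Fin m) ℝ :=
  Matrix.of fun i j => if i ≤ j then 1 else 0

lemma mulVec_upperOnes (m : ℕ) (v : Fin m → ℝ) (i : Fin m) :
    ((upperOnes m) *ᵥ v) i = ∑ j ∈ Finset.Ici i, v j := by
  have : Finset.univ.filter (fun j => i ≤ j) = Finset.Ici i := by
    simp [Finset.ext_iff]
  rw [Matrix.mulVec, dotProduct]
  simp only [upperOnes, Matrix.of_apply, ite_mul, one_mul, zero_mul]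
  rw [← Finset.sum_filter, this]

lemma filter_eq_Ici (m : ℕ) (i : Fin m) :
    Finset.univ.filter (fun j => i ≤ j) = Finset.Ici i := by
  simp [Finset.ext_iff]


/-- steady state of the hypercuboidal filter without feedback.
`Δ_∞ = (δ+V) L_u a + W L_u 𝟙` is a fixed point of the combined measurement-and-time
update: with `Δ'` equal to `Δ_∞` except that its first component is `δ+V`, one has
`Δ_∞ = F̄ Δ' + W 𝟙`; explicitly `Δ_∞^{(i)} = (δ+V) Σ_{j≥i} |a_j| + (m−i+1) W` (1-based). -/
theorem steadyState_fixedPoint (m : ℕ) (hm : 1 ≤ m) (a : Fin m → ℝ)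
    (δ V W : ℝ) (hδ : 0 ≤ δ) (hV : 0 ≤ V) (hW : 0 ≤ W)
    (Δinf Δ' : Fin m → ℝ)
    (hΔinf : Δinf = (δ + V) • ((upperOnes m) *ᵥ (fun j => |a j|))
        + W • ((upperOnes m) *ᵥ (fun _ => (1 : ℝ))))
    (hΔ' : Δ' = Function.update Δinf ⟨0, by omega⟩ (δ + V)) :
    Δinf = (entrywiseAbs (companionForm m a)) *ᵥ Δ' + W • (fun _ => (1 : ℝ)) ∧
      ∀ i : Fin m, Δinf i =
        (δ + V) * (∑ j ∈ Finset.univ.filter (fun j => i ≤ j), |a j|)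
          + ((m - (i : ℕ) : ℕ) : ℝ) * W := by
  have h2 : ∀ i : Fin m, Δinf i =
      (δ + V) * (∑ j ∈ Finset.Ici i, |a j|) + ((m - (i : ℕ) : ℕ) : ℝ) * W := by
    intro i
    subst hΔinf
    simp only [Pi.add_apply, Pi.smul_apply, smul_eq_mul, mulVec_upperOnes]
    rw [Finset.sum_const, Fin.card_Ici]
    push_cast
    ring
  refine ⟨?_, fun i => by rw [h2 i, filter_eq_Ici]⟩
  funext i
  have habs : ∀ j : Fin m, entrywiseAbs (companionForm m a) i j =
      (if (j : ℕ) = 0 then |a i| else 0) + (if (j : ℕ) = (i : ℕ) + 1 then 1 else 0) := by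
    intro j
    by_cases h0 : (j : ℕ) = 0 <;> by_cases h1 : (j : ℕ) = (i : ℕ) + 1 <;>
      simp [entrywiseAbs, companionForm, h0, h1] <;> omega
  have hΔ'0 : Δ' ⟨0, by omega⟩ = δ + V := by rw [hΔ']; simp
  have key0 : ∀ j : Fin m, ((j : ℕ) = 0) = (j = ⟨0, by omega⟩) := by
    intro j; simp [Fin.ext_iff]
  rw [Pi.add_apply, Matrix.mulVec, dotProduct]
  simp only [habs, add_mul, ite_mul, zero_mul, one_mul, Finset.sum_add_distrib,
    Pi.smul_apply, smul_eq_mul, mul_one]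
  simp only [key0, Finset.sum_ite_eq', Finset.mem_univ, if_true, hΔ'0]
  by_cases hi : (i : ℕ) + 1 < m
  · have key1 : ∀ j : Fin m, ((j : ℕ) = (i : ℕ) + 1) = (j = ⟨(i : ℕ) + 1, hi⟩) := by
      intro j; simp [Fin.ext_iff]
    simp only [key1, Finset.sum_ite_eq', Finset.mem_univ, if_true]
    have hΔ'i : Δ' ⟨(i : ℕ) + 1, hi⟩ = Δinf ⟨(i : ℕ) + 1, hi⟩ := by
      rw [hΔ']
      rw [Function.update_of_ne (by simp [Fin.ext_iff])]
    rw [hΔ'i, h2 i, h2 ⟨(i : ℕ) + 1, hi⟩]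
    have hIci : Finset.Ici i = insert i (Finset.Ici (⟨(i : ℕ) + 1, hi⟩ : Fin m)) := by
      ext j
      simp only [Finset.mem_Ici, Finset.mem_insert, Fin.le_def, Fin.ext_iff]
      omega
    rw [hIci, Finset.sum_insert (by simp only [Finset.mem_Ici, Fin.le_def]; omega)]
    have hcard : (m - (i : ℕ)) = (m - ((i : ℕ) + 1)) + 1 := by omega
    rw [hcard]
    push_cast
    ring
  · have key1 : ∀ j : Fin m, ¬ ((j : ℕ) = (i : ℕ) + 1) := by
      intro j; omega
    simp only [key1, if_false, Finset.sum_const_zero]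
    rw [h2 i]
    have hIci : Finset.Ici i = {i} := by
      ext j
      simp only [Finset.mem_Ici, Finset.mem_singleton, Fin.le_def, Fin.ext_iff]
      omega
    have hcard : m - (i : ℕ) = 1 := by omega
    rw [hIci, hcard, Finset.sum_singleton]
    push_cast
    ring
end

section
/- Let m ≥ 1, let a_1,…,a_m be reals, let F be the associated m×m companion-form matrix, let n ≥ 1 and r ∈ ℝ, and let D_{nr} = diag(2^{−nr}, 1, …, 1). If 2^{nr} > max{ |a_m|·2^{m−1}, max_{1≤i≤m−1} |a_i|·2^i }, then the spectral radius of the nonnegative matrix F̄ D_{nr} is strictly less than 1. -/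
open Matrix

/-- The diagonal matrix `D_{nr} = diag(2^{-nr}, 1, …, 1)`. -/
noncomputable def rateDiag (m n : ℕ) (r : ℝ) : Matrix (Fin m) (Fin m) ℝ :=
  Matrix.diagonal fun i => if (i : ℕ) = 0 then (2 : ℝ) ^ (-((n : ℝ) * r)) else 1

/-- The spectral radius of a real square matrix: the maximum modulus of its complex
eigenvalues, formalized as the spectral radius (over `ℂ`) of its complexification. -/
noncomputable def specRad {m : ℕ} (A : Matrix (Fin m) (Fin m) ℝ) : ENNReal :=
  spectralRadius ℂ (A.map (Complex.ofReal ·))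

/-! Conjugating by `diag(1, 2⁻¹, …, 2^{-(m-1)})` leaves the spectrum unchanged, and the spectral
radius is at most the `L∞` operator norm, the largest row sum. After the conjugation row `i` of
`F̄ D_{nr}` sums to `2^{i-1} |a_i| 2^{-nr} + 1/2` (just
`2^{m-1} |a_m| 2^{-nr}` in the last row), which the rate condition makes `< 1`. -/

section WeightedRowSum

open scoped Matrix.Norms.Operator

variable {ι : Type*} [Fintype ι] [DecidableEq ι] [Nonempty ι]

theorem Matrix.spectralRadius_lt_one_of_weighted_row_sum_lt (B : Matrix ι ι ℂ) {w : ι → ℝ}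
    (hw : ∀ i, 0 < w i) (hB : ∀ i, ∑ j, ‖B i j‖ * w j < w i) :
    spectralRadius ℂ B < 1 := by
  have hw0 : ∀ i, (w i : ℂ) ≠ 0 := fun i => Complex.ofReal_ne_zero.mpr (hw i).ne'
  let u : (Matrix ι ι ℂ)ˣ :=
    ⟨diagonal fun i => (w i : ℂ), diagonal fun i => (w i : ℂ)⁻¹,
      by simp [diagonal_mul_diagonal, hw0], by simp [diagonal_mul_diagonal, hw0]⟩
  let C : Matrix ι ι ℂ := (↑u⁻¹ : Matrix ι ι ℂ) * B * (u : Matrix ι ι ℂ)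
  have hC : ∀ i j, C i j = (w i : ℂ)⁻¹ * B i j * w j := by
    intro i j
    simp [C, u, mul_diagonal, diagonal_mul]
  calc spectralRadius ℂ B = spectralRadius ℂ C := by
        rw [spectralRadius, spectralRadius, show spectrum ℂ C = spectrum ℂ B from
          spectrum.units_conjugate']
    _ ≤ ‖C‖₊ := spectrum.spectralRadius_le_nnnorm _
    _ < 1 := by
      rw [← ENNReal.coe_one, ENNReal.coe_lt_coe, linfty_opNNNorm_def,
        Finset.sup_lt_iff zero_lt_one]
      intro i _
      rw [← NNReal.coe_lt_coe]
      push_cast [coe_nnnorm]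
      simp only [hC, norm_mul, norm_inv, Complex.norm_real, Real.norm_eq_abs,
        abs_of_pos (hw _), mul_assoc, ← Finset.mul_sum]
      rw [inv_mul_lt_one₀ (hw i)]
      exact hB i

end WeightedRowSum

theorem entrywiseAbs_companionForm_apply {m : ℕ} (a : Fin m → ℝ) (i j : Fin m) :
    entrywiseAbs (companionForm m a) i j =
      (if (j : ℕ) = 0 then |a i| else 0) + (if (j : ℕ) = (i : ℕ) + 1 then 1 else 0) := by
  simp only [entrywiseAbs, companionForm, of_apply]
  split_ifs <;> first | omega | simp

theorem mul_rateDiag_apply {m : ℕ} (A : Matrix (Fin m) (Fin m) ℝ) (n : ℕ) (r : ℝ) (i j : Fin m) :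
    (A * rateDiag m n r) i j = A i j * if (j : ℕ) = 0 then (2 : ℝ) ^ (-((n : ℝ) * r)) else 1 := by
  rw [rateDiag, mul_diagonal]

theorem weighted_row_sum_companionForm_mul_rateDiag {m : ℕ} (a : Fin m → ℝ) (n : ℕ) (r : ℝ)
    (w : ℕ → ℝ) (i : Fin m) :
    ∑ j : Fin m, |(entrywiseAbs (companionForm m a) * rateDiag m n r) i j| * w j =
      |a i| * (2 : ℝ) ^ (-((n : ℝ) * r)) * w 0 + if (i : ℕ) + 1 < m then w (i + 1) else 0 := by
  have hentry : ∀ j : Fin m, |(entrywiseAbs (companionForm m a) * rateDiag m n r) i j| * w j =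
      (if (j : ℕ) = 0 then |a i| * (2 : ℝ) ^ (-((n : ℝ) * r)) * w 0 else 0) +
        if (j : ℕ) = (i : ℕ) + 1 then w (i + 1) else 0 := by
    intro j
    rw [mul_rateDiag_apply, entrywiseAbs_companionForm_apply]
    split_ifs <;> first | omega | simp_all [abs_of_nonneg, Real.rpow_nonneg]
  simp only [hentry, Finset.sum_add_distrib]
  rw [Fin.sum_univ_eq_sum_range (fun j => if j = 0 then _ else 0),
    Fin.sum_univ_eq_sum_range (fun j => if j = (i : ℕ) + 1 then _ else 0),
    Finset.sum_ite_eq', Finset.sum_ite_eq']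
  simp [i.pos]

theorem specRad_lt_one_of_weighted_row_sum_lt {m : ℕ} [NeZero m] (A : Matrix (Fin m) (Fin m) ℝ)
    {w : Fin m → ℝ} (hw : ∀ i, 0 < w i) (hA : ∀ i, ∑ j, |A i j| * w j < w i) :
    specRad A < 1 :=
  Matrix.spectralRadius_lt_one_of_weighted_row_sum_lt _ hw <| by
    simpa only [map_apply, Complex.norm_real, Real.norm_eq_abs] using hA

/-- `a : Fin m → ℝ` is 0-indexed, so the paper's `a_i` is `a ⟨i - 1, _⟩`. -/
theorem specRad_lt_one_of_rate (m : ℕ) (hm : 1 ≤ m) (a : Fin m → ℝ)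
    (n : ℕ) (r : ℝ)
    (hlast : |a ⟨m - 1, by omega⟩| * 2 ^ (m - 1) < (2 : ℝ) ^ ((n : ℝ) * r))
    (hrest : ∀ i : Fin m, (i : ℕ) + 1 < m →
      |a i| * 2 ^ ((i : ℕ) + 1) < (2 : ℝ) ^ ((n : ℝ) * r)) :
    specRad (entrywiseAbs (companionForm m a) * rateDiag m n r) < 1 := by
  have : NeZero m := ⟨by omega⟩
  set P : ℝ := (2 : ℝ) ^ ((n : ℝ) * r)
  have hP : 0 < P := by positivity
  have hcoeff_lt : ∀ (i : Fin m) (k : ℕ), |a i| * 2 ^ k < P → |a i| * P⁻¹ < 2⁻¹ ^ k := by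
    intro i k h
    rw [inv_pow, ← div_eq_mul_inv, div_lt_iff₀ hP, ← div_eq_inv_mul, lt_div_iff₀ (by positivity)]
    exact h
  refine specRad_lt_one_of_weighted_row_sum_lt _ (w := fun j => 2⁻¹ ^ (j : ℕ)) (by simp)
    fun i => ?_
  rw [weighted_row_sum_companionForm_mul_rateDiag, Real.rpow_neg zero_le_two, pow_zero, mul_one]
  split_ifs with hi
  · have := hcoeff_lt i _ (hrest i hi)
    rw [pow_succ] at this ⊢
    linarith
  · have hi_last : i = ⟨m - 1, Nat.sub_lt hm one_pos⟩ := Fin.ext (by simp only; omega)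
    simpa [hi_last] using hcoeff_lt _ _ hlast
end

section
/- Let m ≥ 1, let f(x) = x^m + c_1 x^{m−1} + ⋯ + c_m be a monic polynomial with complex coefficients, and let r be the largest nonnegative real root of the polynomial x^m − |c_1| x^{m−1} − ⋯ − |c_m| (r = 0 if all c_i = 0). Then r ≤ λ(f)/(2^{1/m} − 1), where λ(f) is the maximum modulus of the complex roots of f. Equivalently, for the companion-form matrix F of f, λ(F̄) ≤ λ(F)/(2^{1/m} − 1). -/
/-!
Bound the coefficients of `f` by its roots (Vieta): `‖c i‖ ≤ λ^(i+1) * (m choose (i+1))`.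
Inserting this into the equation for `r` gives
`r^m ≤ ∑ (m choose (i+1)) λ^(i+1) r^(m-1-i) = (λ + r)^m - r^m`,
that is `2 r^m ≤ (λ + r)^m`, and taking `m`-th roots yields `2^(1/m) r ≤ λ + r`.
-/

open Polynomial Finset

namespace Polynomial

variable {R : Type*} [CommSemiring R] {m : ℕ}

noncomputable def monicOfCoeffs (c : Fin m → R) : R[X] :=
  X ^ m + ∑ i : Fin m, C (c i) * X ^ (m - 1 - (i : ℕ))

theorem degree_sum_C_mul_X_pow_lt (c : Fin m → R) :
    (∑ i : Fin m, C (c i) * X ^ (m - 1 - (i : ℕ))).degree < (m : WithBot ℕ) := by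
  refine (degree_sum_le _ _).trans_lt ((Finset.sup_lt_iff (WithBot.bot_lt_coe m)).2 ?_)
  intro i _
  exact (degree_C_mul_X_pow_le _ _).trans_lt (Nat.cast_lt.2 (by omega))

theorem monic_monicOfCoeffs [Nontrivial R] (c : Fin m → R) : (monicOfCoeffs c).Monic :=
  monic_X_pow_add (degree_sum_C_mul_X_pow_lt c)

theorem natDegree_monicOfCoeffs [Nontrivial R] (c : Fin m → R) :
    (monicOfCoeffs c).natDegree = m :=
by
  rw [monicOfCoeffs, natDegree_add_eq_left_of_degree_lt, natDegree_X_pow]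
  simpa only [degree_X_pow] using degree_sum_C_mul_X_pow_lt c

theorem eval_monicOfCoeffs (c : Fin m → R) (z : R) :
    (monicOfCoeffs c).eval z = z ^ m + ∑ i : Fin m, c i * z ^ (m - 1 - (i : ℕ)) := by
  simp [monicOfCoeffs, eval_finsetSum]

theorem coeff_monicOfCoeffs (c : Fin m → R) (i : Fin m) :
    (monicOfCoeffs c).coeff (m - 1 - (i : ℕ)) = c i := by
  have hi := i.isLt
  rw [monicOfCoeffs, coeff_add, coeff_X_pow, if_neg (by omega), zero_add, finsetSum_coeff,
    Finset.sum_eq_single i]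
  · simp
  · intro j _ hj
    have hji : m - 1 - (j : ℕ) ≠ m - 1 - (i : ℕ) := by have := j.isLt; omega
    simp [coeff_X_pow, hji.symm]
  · simp

end Polynomial

theorem norm_le_pow_mul_choose_of_roots_norm_le {m : ℕ} (c : Fin m → ℂ) {B : ℝ}
    (hB : ∀ z : ℂ, z ^ m + ∑ i : Fin m, c i * z ^ (m - 1 - (i : ℕ)) = 0 → ‖z‖ ≤ B)
    (i : Fin m) : ‖c i‖ ≤ B ^ ((i : ℕ) + 1) * m.choose ((i : ℕ) + 1) := by
  have hroots : ∀ z ∈ ((monicOfCoeffs c).map (RingHom.id ℂ)).roots, ‖z‖ ≤ B := by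
    intro z hz
    rw [Polynomial.map_id, mem_roots (monic_monicOfCoeffs c).ne_zero, IsRoot,
      eval_monicOfCoeffs] at hz
    exact hB z hz
  have h := coeff_le_of_roots_le (m - 1 - (i : ℕ)) (monic_monicOfCoeffs c)
    (IsAlgClosed.splits _) hroots
  have hi := i.isLt
  rwa [Polynomial.map_id, coeff_monicOfCoeffs, natDegree_monicOfCoeffs,
    show m - (m - 1 - (i : ℕ)) = (i : ℕ) + 1 by omega,
    Nat.choose_symm_of_eq_add (b := (i : ℕ) + 1) (by omega)] at h

theorem add_pow_eq_pow_add_sum_fin {R : Type*} [CommSemiring R] (x y : R) (m : ℕ) :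
    (x + y) ^ m = y ^ m + ∑ i : Fin m, x ^ ((i : ℕ) + 1) * m.choose ((i : ℕ) + 1) *
      y ^ (m - 1 - (i : ℕ)) := by
  rw [add_pow, sum_range_succ', Fin.sum_univ_eq_sum_range
    (fun k => x ^ (k + 1) * (m.choose (k + 1) : R) * y ^ (m - 1 - k)) m, add_comm]
  simp only [pow_zero, one_mul, Nat.sub_zero, Nat.choose_zero_right, Nat.cast_one, mul_one]
  congr 1
  refine sum_congr rfl fun k _ => ?_
  rw [show m - (k + 1) = m - 1 - k by omega]
  ring

theorem le_div_two_rpow_one_div_sub_one_of_two_mul_pow_le {m : ℕ} (hm : m ≠ 0) {L r : ℝ}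
    (hr : 0 ≤ r) (hLr : 0 ≤ L + r) (h : 2 * r ^ m ≤ (L + r) ^ m) :
    r ≤ L / ((2 : ℝ) ^ ((1 : ℝ) / m) - 1) := by
  have hroot : (2 : ℝ) ^ ((1 : ℝ) / m) * r ≤ L + r := by
    refine (pow_le_pow_iff_left₀ (by positivity) hLr hm).1 ?_
    rwa [mul_pow, one_div, Real.rpow_inv_natCast_pow zero_le_two hm]
  have hpos : 0 < (2 : ℝ) ^ ((1 : ℝ) / m) - 1 := by
    rw [sub_pos]
    exact Real.one_lt_rpow one_lt_two (by positivity)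
  rw [le_div_iff₀ hpos]
  linarith

theorem abs_companion_spectralRadius_le_general (m : ℕ) (hm : 1 ≤ m) (c : Fin m → ℂ)
    (lamf : ℝ)
    (hlam_ub : ∀ z : ℂ, z ^ m + ∑ i : Fin m, c i * z ^ (m - 1 - (i : ℕ)) = 0 →
      ‖z‖ ≤ lamf)
    (hlam_ex : ∃ z : ℂ, z ^ m + ∑ i : Fin m, c i * z ^ (m - 1 - (i : ℕ)) = 0 ∧
      ‖z‖ = lamf)
    (r : ℝ) (hr0 : 0 ≤ r)
    (hr_root : r ^ m = ∑ i : Fin m, ‖c i‖ * r ^ (m - 1 - (i : ℕ))) :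
    r ≤ lamf / ((2 : ℝ) ^ ((1 : ℝ) / m) - 1) := by
  obtain ⟨z₀, -, hz₀⟩ := hlam_ex
  have hlam0 : 0 ≤ lamf := hz₀ ▸ norm_nonneg z₀
  have hsum : r ^ m ≤ ∑ i : Fin m, lamf ^ ((i : ℕ) + 1) * m.choose ((i : ℕ) + 1) *
      r ^ (m - 1 - (i : ℕ)) := by
    rw [hr_root]
    gcongr with i
    exact norm_le_pow_mul_choose_of_roots_norm_le c hlam_ub i
  refine le_div_two_rpow_one_div_sub_one_of_two_mul_pow_le (by omega) hr0 (by positivity) ?_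
  rw [add_pow_eq_pow_add_sum_fin]
  linarith

/-- Let `f(x) = x^m + c_1 x^{m-1} + ⋯ + c_m` be monic with complex
coefficients, let `λf` be the maximum modulus of its complex roots, and let `r` be the
largest nonnegative real root of `x^m − |c_1| x^{m-1} − ⋯ − |c_m|`. Then
`r ≤ λf / (2^{1/m} − 1)`. (Equivalently, `λ(F̄) ≤ λ(F)/(2^{1/m} − 1)` for the
companion-form matrix `F` of `f`. Here `c : Fin m → ℂ` is 0-indexed.) -/
theorem abs_companion_spectralRadius_le (m : ℕ) (hm : 1 ≤ m) (c : Fin m → ℂ)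
    (lamf : ℝ)
    (hlam_ub : ∀ z : ℂ, z ^ m + ∑ i : Fin m, c i * z ^ (m - 1 - (i : ℕ)) = 0 →
      ‖z‖ ≤ lamf)
    (hlam_ex : ∃ z : ℂ, z ^ m + ∑ i : Fin m, c i * z ^ (m - 1 - (i : ℕ)) = 0 ∧
      ‖z‖ = lamf)
    (r : ℝ) (hr0 : 0 ≤ r)
    (hr_root : r ^ m = ∑ i : Fin m, ‖c i‖ * r ^ (m - 1 - (i : ℕ)))
    (hr_max : ∀ s : ℝ, 0 ≤ s →
      s ^ m = ∑ i : Fin m, ‖c i‖ * s ^ (m - 1 - (i : ℕ)) → s ≤ r) :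
    r ≤ lamf / ((2 : ℝ) ^ ((1 : ℝ) / m) - 1) :=
  abs_companion_spectralRadius_le_general m hm c lamf hlam_ub hlam_ex r hr0 hr_root
end

section
/- Let μ_1,…,μ_m be nonzero complex numbers with |μ_i| ≠ 1 for every i and |μ_i| > 1 for at least one i, and let k = #{i : |μ_i| > 1}. For each positive integer n define a_{1,n},…,a_{m,n} by ∏_{j=1}^m (z − μ_j^n) = z^m + a_{1,n} z^{m−1} + ⋯ + a_{m,n}. Then for every index i with 1 ≤ i ≤ m and i ≠ k, the ratio |a_{i,n}| / |a_{k,n}| tends to 0 as n → ∞. -/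
/-- `acoef m μ n i` is the coefficient `a_{i,n}` (for `1 ≤ i ≤ m`) defined by
`∏_{j=1}^m (z − μ_j^n) = z^m + a_{1,n} z^{m-1} + ⋯ + a_{m,n}`;
i.e. the coefficient of `z^{m-i}` in the monic polynomial with roots `μ_1^n, …, μ_m^n`. -/
noncomputable def acoef (m : ℕ) (μ : Fin m → ℂ) (n i : ℕ) : ℂ :=
  (∏ j : Fin m, (Polynomial.X - Polynomial.C (μ j ^ n))).coeff (m - i)

/-!
Expanding the product, `a_{i,n} = (-1)^i ∑_{#S = i} (∏_{j ∈ S} μ_j)^n`. Since no `|μ_j|` equals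
`1`, the set `T` of indices with `|μ_j| > 1` is the unique subset maximising `|∏_{j ∈ S} μ_j|`.
Dividing by `(∏_{j ∈ T} μ_j)^n`, every `a_{i,n}` with `i ≠ k = #T` tends to `0` while `a_{k,n}`
tends to `(-1)^k`, so the ratio of their absolute values tends to `0`.
-/

open Filter Topology Finset Polynomial

lemma acoef_eq_sum_powersetCard {m : ℕ} (μ : Fin m → ℂ) (n : ℕ) {i : ℕ} (hi : i ≤ m) :
    acoef m μ n i = (-1) ^ i * ∑ S ∈ univ.powersetCard i, (∏ j ∈ S, μ j) ^ n := by
  have hX : ∀ j, X - C (μ j ^ n) = X + C (-(μ j ^ n)) := fun j => by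
    rw [map_neg, sub_eq_add_neg]
  simp_rw [acoef, hX]
  rw [Finset.prod_X_add_C_coeff _ _ (by simp), card_univ, Fintype.card_fin,
    Nat.sub_sub_self hi, mul_sum]
  refine sum_congr rfl fun S hS => ?_
  rw [prod_neg, (mem_powersetCard.mp hS).2, prod_pow]

section ProdFilterOneLt

variable {ι : Type*} [Fintype ι] {f : ι → ℝ}

theorem Finset.prod_le_prod_filter_one_lt (hf0 : ∀ j, 0 ≤ f j) (S : Finset ι) :
    ∏ j ∈ S, f j ≤ ∏ j ∈ univ.filter (fun j => 1 < f j), f j :=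
  calc ∏ j ∈ S, f j ≤ ∏ j ∈ S.filter (fun j => 1 < f j), f j :=
        prod_le_prod_of_subset_of_le_one (filter_subset _ S) (fun j _ => hf0 j)
          fun _ hjS hj => not_lt.1 fun h => hj (mem_filter.2 ⟨hjS, h⟩)
    _ ≤ ∏ j ∈ univ.filter (fun j => 1 < f j), f j :=
        prod_le_prod_of_subset_of_one_le (filter_subset_filter _ (subset_univ S))
          (fun j _ => hf0 j) fun _ hj _ => (mem_filter.1 hj).2.le

theorem Finset.prod_lt_prod_filter_one_lt [DecidableEq ι] (hf0 : ∀ j, 0 ≤ f j)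
    (hf1 : ∀ j, f j ≠ 1) {S : Finset ι} (hS : S ≠ univ.filter fun j => 1 < f j) :
    ∏ j ∈ S, f j < ∏ j ∈ univ.filter (fun j => 1 < f j), f j := by
  set T := univ.filter fun j => 1 < f j
  have hT : ∀ j, j ∈ T ↔ 1 < f j := by simp [T]
  have hpos : ∀ U ⊆ T, 0 < ∏ j ∈ U, f j := fun U hU =>
    prod_pos fun j hj => one_pos.trans ((hT j).1 (hU hj))
  by_cases hST : S ⊆ T
  · obtain ⟨j, hjT, hjS⟩ := exists_of_ssubset (ssubset_of_subset_of_ne hST hS)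
    calc ∏ j ∈ S, f j ≤ ∏ i ∈ T.erase j, f i :=
          prod_le_prod_of_subset_of_one_le
            (fun i hi => mem_erase.2 ⟨ne_of_mem_of_not_mem hi hjS, hST hi⟩) (fun i _ => hf0 i)
            fun i hi _ => ((hT i).1 (mem_of_mem_erase hi)).le
      _ < f j * ∏ i ∈ T.erase j, f i :=
          lt_mul_of_one_lt_left (hpos _ (erase_subset j T)) ((hT j).1 hjT)
      _ = ∏ j ∈ T, f j := mul_prod_erase T f hjT
  · obtain ⟨j, hjS, hjT⟩ := not_subset.1 hST
    have hj1 : f j < 1 := (hf1 j).lt_of_le (not_lt.1 fun h => hjT ((hT j).2 h))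
    calc ∏ j ∈ S, f j = f j * ∏ i ∈ S.erase j, f i := (mul_prod_erase S f hjS).symm
      _ ≤ f j * ∏ j ∈ T, f j :=
          mul_le_mul_of_nonneg_left (prod_le_prod_filter_one_lt hf0 _) (hf0 j)
      _ < ∏ j ∈ T, f j := mul_lt_of_lt_one_left (hpos T subset_rfl) hj1

end ProdFilterOneLt

section DominantPower

variable {𝕜 α : Type*} [NormedField 𝕜] {s : Finset α} {c : α → 𝕜}

theorem tendsto_sum_pow_div_pow_zero {P : 𝕜} (h : ∀ a ∈ s, ‖c a‖ < ‖P‖) :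
    Tendsto (fun n => (∑ a ∈ s, c a ^ n) / P ^ n) atTop (𝓝 0) := by
  have hratio : ∀ a ∈ s, ‖c a / P‖ < 1 := fun a ha => by
    rw [norm_div, div_lt_one ((norm_nonneg _).trans_lt (h a ha))]
    exact h a ha
  simp_rw [sum_div, ← div_pow]
  simpa using tendsto_finsetSum s fun a ha =>
    tendsto_pow_atTop_nhds_zero_of_norm_lt_one (hratio a ha)

theorem tendsto_sum_pow_div_pow_one [DecidableEq α] {b : α} (hb : b ∈ s) (hcb : c b ≠ 0)
    (h : ∀ a ∈ s, a ≠ b → ‖c a‖ < ‖c b‖) :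
    Tendsto (fun n => (∑ a ∈ s, c a ^ n) / c b ^ n) atTop (𝓝 1) := by
  have hrest := (tendsto_sum_pow_div_pow_zero (s := s.erase b) fun a ha =>
    h a (mem_of_mem_erase ha) (ne_of_mem_erase ha)).const_add 1
  rw [add_zero] at hrest
  refine hrest.congr fun n => ?_
  rw [← add_sum_erase s _ hb, add_div, div_self (pow_ne_zero n hcb)]

end DominantPower

section Acoef

variable {m : ℕ} {μ : Fin m → ℂ}

noncomputable def expandingIndices (μ : Fin m → ℂ) : Finset (Fin m) :=
  univ.filter fun j => 1 < ‖μ j‖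

lemma prod_expandingIndices_ne_zero : ∏ j ∈ expandingIndices μ, μ j ≠ 0 :=
  prod_ne_zero_iff.2 fun _ hj => norm_pos_iff.1 (one_pos.trans (mem_filter.1 hj).2)

lemma norm_prod_lt_norm_prod_expandingIndices (hμ1 : ∀ j, ‖μ j‖ ≠ 1) {S : Finset (Fin m)}
    (hS : S ≠ expandingIndices μ) :
    ‖∏ j ∈ S, μ j‖ < ‖∏ j ∈ expandingIndices μ, μ j‖ := by
  rw [norm_prod, norm_prod]
  exact prod_lt_prod_filter_one_lt (fun j => norm_nonneg (μ j)) hμ1 hS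

theorem tendsto_acoef_div_pow_zero (hμ1 : ∀ j, ‖μ j‖ ≠ 1) {i : ℕ} (hi : i ≤ m)
    (hik : i ≠ #(expandingIndices μ)) :
    Tendsto (fun n => acoef m μ n i / (∏ j ∈ expandingIndices μ, μ j) ^ n) atTop (𝓝 0) := by
  have hsum := (tendsto_sum_pow_div_pow_zero (s := univ.powersetCard i)
    (c := fun S => ∏ j ∈ S, μ j) fun S hS => norm_prod_lt_norm_prod_expandingIndices hμ1 fun h =>
      hik (h ▸ (mem_powersetCard.1 hS).2).symm).const_mul ((-1) ^ i)
  rw [mul_zero] at hsum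
  refine hsum.congr fun n => ?_
  rw [acoef_eq_sum_powersetCard μ n hi, mul_div_assoc]

theorem tendsto_acoef_card_div_pow (hμ1 : ∀ j, ‖μ j‖ ≠ 1) :
    Tendsto (fun n => acoef m μ n #(expandingIndices μ) / (∏ j ∈ expandingIndices μ, μ j) ^ n)
      atTop (𝓝 ((-1) ^ #(expandingIndices μ))) := by
  have hsum := (tendsto_sum_pow_div_pow_one (c := fun S => ∏ j ∈ S, μ j)
    (mem_powersetCard.2 ⟨subset_univ _, rfl⟩) prod_expandingIndices_ne_zero
    fun S _ hS => norm_prod_lt_norm_prod_expandingIndices hμ1 hS).const_mul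
    ((-1) ^ #(expandingIndices μ))
  rw [mul_one] at hsum
  refine hsum.congr fun n => ?_
  rw [acoef_eq_sum_powersetCard μ n (card_le_univ _ |>.trans_eq (Fintype.card_fin m)),
    mul_div_assoc]

end Acoef

theorem acoef_ratio_tendsto_zero_general (m : ℕ) (μ : Fin m → ℂ)
    (hμ1 : ∀ i, ‖μ i‖ ≠ 1)
    (k : ℕ) (hk : k = (Finset.univ.filter fun i => 1 < ‖μ i‖).card) :
    ∀ i : ℕ, 1 ≤ i → i ≤ m → i ≠ k →
      Filter.Tendsto
        (fun n : ℕ => ‖acoef m μ n i‖ / ‖acoef m μ n k‖)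
        Filter.atTop (nhds 0) := by
  intro i _ him hik
  obtain rfl : k = #(expandingIndices μ) := hk
  have hratio := (tendsto_acoef_div_pow_zero hμ1 him hik).norm.div
    (tendsto_acoef_card_div_pow hμ1).norm (by simp)
  rw [norm_zero, zero_div] at hratio
  refine hratio.congr fun n => ?_
  rw [Pi.div_apply, norm_div, norm_div, div_div_div_cancel_right₀
    (norm_ne_zero_iff.2 (pow_ne_zero n prod_expandingIndices_ne_zero))]

/-- If `|μ_i| ≠ 1` for all `i`, `|μ_i| > 1` for some `i`, and
`k = #{i : |μ_i| > 1}`, then for every `1 ≤ i ≤ m` with `i ≠ k`,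
`|a_{i,n}| / |a_{k,n}| → 0` as `n → ∞`. -/
theorem acoef_ratio_tendsto_zero (m : ℕ) (μ : Fin m → ℂ)
    (hμ0 : ∀ i, μ i ≠ 0) (hμ1 : ∀ i, ‖μ i‖ ≠ 1)
    (hex : ∃ i, 1 < ‖μ i‖)
    (k : ℕ) (hk : k = (Finset.univ.filter fun i => 1 < ‖μ i‖).card) :
    ∀ i : ℕ, 1 ≤ i → i ≤ m → i ≠ k →
      Filter.Tendsto
        (fun n : ℕ => ‖acoef m μ n i‖ / ‖acoef m μ n k‖)
        Filter.atTop (nhds 0) :=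
  acoef_ratio_tendsto_zero_general m μ hμ1 k hk
end

section
/- Let μ_1,…,μ_m be nonzero complex numbers with |μ_i| ≠ 1 for every i and |μ_i| > 1 for at least one i. For each positive integer n define a_{1,n},…,a_{m,n} by ∏_{j=1}^m (z − μ_j^n) = z^m + a_{1,n} z^{m−1} + ⋯ + a_{m,n}. Then lim_{n→∞} (1/n)·log₂ ( Σ_{i=1}^m |a_{i,n}| ) = Σ_{i : |μ_i| > 1} log₂ |μ_i|. (That is, the rate threshold R_n = (1/n) log₂ Σ_i |a_{i,n}| of the no-feedback stabilization theorem converges to R* = Σ_{|μ_i|>1} log₂ |μ_i|.) -/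
open Finset Filter Asymptotics Topology Polynomial

section ProductBounds

variable {ι : Type*} (w : ι → ℝ)

lemma prod_lt_prod_of_ssubset_of_one_lt {s t : Finset ι} (hst : s ⊂ t)
    (hw : ∀ i ∈ t, 1 < w i) : ∏ i ∈ s, w i < ∏ i ∈ t, w i := by
  classical
  have hs : 0 < ∏ i ∈ s, w i := prod_pos fun i hi => one_pos.trans (hw i (hst.subset hi))
  have hrest : 1 < ∏ i ∈ t \ s, w i := by
    simpa using prod_lt_prod_of_nonempty (fun _ _ => one_pos)
      (fun i hi => hw i (mem_sdiff.1 hi).1) (sdiff_nonempty.2 hst.not_subset)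
  rw [← prod_sdiff hst.subset]
  exact lt_mul_of_one_lt_left hs hrest

lemma prod_le_prod_filter_one_lt (hw : ∀ i, 0 ≤ w i) (t : Finset ι) :
    ∏ i ∈ t, w i ≤ ∏ i ∈ t.filter (1 < w ·), w i :=
  prod_le_prod_of_subset_of_le_one (filter_subset _ _) (fun i _ => hw i)
    (fun i hi hni => by simpa [hi] using hni)

variable [Fintype ι]

lemma prod_le_prod_univ_filter_one_lt (hw : ∀ i, 0 ≤ w i) (t : Finset ι) :
    ∏ i ∈ t, w i ≤ ∏ i ∈ univ.filter (1 < w ·), w i :=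
  (prod_le_prod_filter_one_lt w hw t).trans <|
    prod_le_prod_of_subset_of_one_le (filter_subset_filter _ (subset_univ t))
      (fun i _ => hw i) (fun _ hi _ => (mem_filter.1 hi).2.le)

lemma prod_lt_prod_univ_filter_one_lt (hw : ∀ i, 0 ≤ w i) {t : Finset ι}
    (hcard : #t = #(univ.filter (1 < w ·))) (hne : t ≠ univ.filter (1 < w ·)) :
    ∏ i ∈ t, w i < ∏ i ∈ univ.filter (1 < w ·), w i := by
  have hsub : t.filter (1 < w ·) ⊂ univ.filter (1 < w ·) := by
    refine ssubset_of_subset_of_ne (filter_subset_filter _ (subset_univ t)) fun heq => hne ?_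
    refine (eq_of_subset_of_card_le (fun i hi => ?_) hcard.le).symm
    exact filter_subset _ t (heq.symm.subset hi)
  exact (prod_le_prod_filter_one_lt w hw t).trans_lt <|
    prod_lt_prod_of_ssubset_of_one_lt w hsub fun i hi => (mem_filter.1 hi).2

end ProductBounds

lemma eventually_mul_pow_le_norm_sum_pow {α 𝕜 : Type*} [NormedDivisionRing 𝕜] {s : Finset α}
    {z : α → 𝕜} {a : α} (ha : a ∈ s) (hlt : ∀ b ∈ s, b ≠ a → ‖z b‖ < ‖z a‖) :
    ∀ᶠ n in atTop, 2⁻¹ * ‖z a‖ ^ n ≤ ‖∑ b ∈ s, z b ^ n‖ := by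
  classical
  have hsmall : (fun n => ∑ b ∈ s.erase a, ‖z b‖ ^ n) =o[atTop] (fun n => ‖z a‖ ^ n) :=
    IsLittleO.fun_sum fun b hb =>
      isLittleO_pow_pow_of_lt_left (norm_nonneg _)
        (hlt b (mem_of_mem_erase hb) (ne_of_mem_erase hb))
  filter_upwards [hsmall.bound (by norm_num : (0 : ℝ) < 2⁻¹)] with n hn
  have hrest : ‖∑ b ∈ s.erase a, z b ^ n‖ ≤ ∑ b ∈ s.erase a, ‖z b‖ ^ n :=
    (norm_sum_le _ _).trans_eq (sum_congr rfl fun b _ => norm_pow _ _)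
  rw [Real.norm_of_nonneg (sum_nonneg fun _ _ => by positivity),
    Real.norm_of_nonneg (by positivity)] at hn
  have htriangle := norm_sub_le_norm_add (z a ^ n) (∑ b ∈ s.erase a, z b ^ n)
  rw [add_sum_erase s (fun b => z b ^ n) ha, norm_pow] at htriangle
  linarith

lemma norm_acoef_eq {m : ℕ} (μ : Fin m → ℂ) (n : ℕ) {i : ℕ} (hi : i ≤ m) :
    ‖acoef m μ n i‖ = ‖∑ t ∈ powersetCard i univ, (∏ j ∈ t, μ j) ^ n‖ := by
  have hcard : Multiset.card (univ.val.map fun j => μ j ^ n) = m := by simp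
  have hprod : ∏ j : Fin m, (X - C (μ j ^ n))
      = ((univ.val.map fun j => μ j ^ n).map fun a => X - C a).prod := by
    rw [Multiset.map_map]
    rfl
  rw [acoef, hprod, Multiset.prod_X_sub_C_coeff _ (hcard.symm ▸ Nat.sub_le m i), hcard,
    Nat.sub_sub_self hi, esymm_map_val, norm_mul, norm_pow, norm_neg, norm_one, one_pow, one_mul]
  simp only [prod_pow]

/-- The Mahler measure of `∏ j, (X - C (μ j))`. -/
noncomputable def unstableProduct {ι : Type*} [Fintype ι] (μ : ι → ℂ) : ℝ :=
  ∏ i ∈ univ.filter fun i => 1 < ‖μ i‖, ‖μ i‖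

lemma unstableProduct_pos {ι : Type*} [Fintype ι] (μ : ι → ℂ) : 0 < unstableProduct μ :=
  prod_pos fun _ hi => one_pos.trans (mem_filter.1 hi).2

section Coefficients

variable {m : ℕ} (μ : Fin m → ℂ)

lemma norm_acoef_le (n : ℕ) {i : ℕ} (hi : i ≤ m) :
    ‖acoef m μ n i‖ ≤ m.choose i * unstableProduct μ ^ n := by
  rw [norm_acoef_eq μ n hi]
  calc ‖∑ t ∈ powersetCard i univ, (∏ j ∈ t, μ j) ^ n‖
      ≤ ∑ t ∈ powersetCard i (univ : Finset (Fin m)), unstableProduct μ ^ n := by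
        refine (norm_sum_le _ _).trans (sum_le_sum fun t _ => ?_)
        rw [norm_pow, norm_prod]
        exact pow_le_pow_left₀ (prod_nonneg fun _ _ => norm_nonneg _)
          (prod_le_prod_univ_filter_one_lt _ (fun _ => norm_nonneg _) t) n
    _ = m.choose i * unstableProduct μ ^ n := by
        rw [sum_const, card_powersetCard, card_univ, Fintype.card_fin, nsmul_eq_mul]

lemma sum_norm_acoef_le (n : ℕ) :
    ∑ i ∈ Icc 1 m, ‖acoef m μ n i‖ ≤ 2 ^ m * unstableProduct μ ^ n := by
  calc ∑ i ∈ Icc 1 m, ‖acoef m μ n i‖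
      ≤ ∑ i ∈ Icc 1 m, (m.choose i : ℝ) * unstableProduct μ ^ n :=
        sum_le_sum fun i hi => norm_acoef_le μ n (mem_Icc.1 hi).2
    _ ≤ ∑ i ∈ range (m + 1), (m.choose i : ℝ) * unstableProduct μ ^ n :=
        sum_le_sum_of_subset_of_nonneg (fun i hi => by simp at hi ⊢; omega)
          fun _ _ _ => mul_nonneg (Nat.cast_nonneg _) (pow_nonneg (unstableProduct_pos μ).le n)
    _ = 2 ^ m * unstableProduct μ ^ n := by
        rw [← sum_mul, ← Nat.cast_sum, Nat.sum_range_choose, Nat.cast_pow, Nat.cast_ofNat]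

lemma eventually_le_sum_norm_acoef (hex : ∃ i, 1 < ‖μ i‖) :
    ∀ᶠ n in atTop, 2⁻¹ * unstableProduct μ ^ n ≤ ∑ i ∈ Icc 1 m, ‖acoef m μ n i‖ := by
  set U := univ.filter fun i => 1 < ‖μ i‖
  have hk : #U ∈ Icc 1 m := by
    obtain ⟨i, hi⟩ := hex
    exact mem_Icc.2
      ⟨card_pos.2 ⟨i, by simp [U, hi]⟩, (card_le_univ U).trans_eq (Fintype.card_fin m)⟩
  have hdom : ∀ t ∈ powersetCard #U univ, t ≠ U → ‖∏ j ∈ t, μ j‖ < ‖∏ j ∈ U, μ j‖ := by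
    intro t ht hne
    rw [norm_prod, norm_prod]
    exact prod_lt_prod_univ_filter_one_lt _ (fun _ => norm_nonneg _) (mem_powersetCard.1 ht).2 hne
  have hU : U ∈ powersetCard #U univ := mem_powersetCard.2 ⟨subset_univ U, rfl⟩
  filter_upwards [eventually_mul_pow_le_norm_sum_pow hU hdom] with n hn
  rw [norm_prod] at hn
  refine hn.trans ?_
  rw [← norm_acoef_eq μ n (mem_Icc.1 hk).2]
  exact single_le_sum (f := fun i => ‖acoef m μ n i‖) (fun _ _ => norm_nonneg _) hk

end Coefficients

lemma inv_mul_log_mul_pow {n : ℕ} (hn : n ≠ 0) {c P : ℝ} (hc : c ≠ 0) (hP : P ≠ 0) :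
    1 / (n : ℝ) * Real.log (c * P ^ n) = Real.log P + Real.log c * (1 / n) := by
  rw [Real.log_mul hc (pow_ne_zero n hP), Real.log_pow]
  field_simp
  ring

lemma tendsto_inv_mul_log_of_pow_bounds {S : ℕ → ℝ} {c C P : ℝ} (hc : 0 < c) (hP : 0 < P)
    (hlow : ∀ᶠ n in atTop, c * P ^ n ≤ S n) (hup : ∀ᶠ n in atTop, S n ≤ C * P ^ n) :
    Tendsto (fun n : ℕ => 1 / (n : ℝ) * Real.log (S n)) atTop (𝓝 (Real.log P)) := by
  have hlim (a : ℝ) : Tendsto (fun n : ℕ => Real.log P + a * (1 / (n : ℝ))) atTop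
      (𝓝 (Real.log P)) := by
    simpa using tendsto_const_nhds.add (tendsto_one_div_atTop_nhds_zero_nat.const_mul a)
  refine tendsto_of_tendsto_of_tendsto_of_le_of_le' (hlim (Real.log c)) (hlim (Real.log C)) ?_ ?_
  all_goals
    filter_upwards [hlow, hup, eventually_ne_atTop 0] with n hl hu hn
    have hcP : 0 < c * P ^ n := by positivity
    have hCP : 0 < C * P ^ n := hcP.trans_le (hl.trans hu)
    have hC : 0 < C := pos_of_mul_pos_left hCP (by positivity)
  · rw [← inv_mul_log_mul_pow hn hc.ne' hP.ne']
    gcongr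
  · rw [← inv_mul_log_mul_pow hn hC.ne' hP.ne']
    gcongr
    exact hcP.trans_le hl

theorem rate_threshold_tendsto_general (m : ℕ) (μ : Fin m → ℂ)
    (hex : ∃ i, 1 < ‖μ i‖) :
    Filter.Tendsto
      (fun n : ℕ => (1 / (n : ℝ)) *
        Real.logb 2 (∑ i ∈ Finset.Icc 1 m, ‖acoef m μ n i‖))
      Filter.atTop
      (nhds (∑ i ∈ Finset.univ.filter fun i => 1 < ‖μ i‖,
        Real.logb 2 (‖μ i‖))) := by
  have hlog := tendsto_inv_mul_log_of_pow_bounds (by norm_num) (unstableProduct_pos μ)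
    (eventually_le_sum_norm_acoef μ hex) (Eventually.of_forall (sum_norm_acoef_le μ))
  rw [← Real.logb_prod _ _ fun i hi => (one_pos.trans (mem_filter.1 hi).2).ne']
  simpa only [Real.logb, unstableProduct, mul_div_assoc] using hlog.div_const (Real.log 2)

/-- If `|μ_i| ≠ 1` for all `i` and `|μ_i| > 1` for some `i`, then
`(1/n) log₂ (Σ_{i=1}^m |a_{i,n}|) → Σ_{i:|μ_i|>1} log₂ |μ_i|`; that is, the rate
threshold `R_n` of the no-feedback stabilization theorem converges to `R*`. -/
theorem rate_threshold_tendsto (m : ℕ) (μ : Fin m → ℂ)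
    (hμ0 : ∀ i, μ i ≠ 0) (hμ1 : ∀ i, ‖μ i‖ ≠ 1)
    (hex : ∃ i, 1 < ‖μ i‖) :
    Filter.Tendsto
      (fun n : ℕ => (1 / (n : ℝ)) *
        Real.logb 2 (∑ i ∈ Finset.Icc 1 m, ‖acoef m μ n i‖))
      Filter.atTop
      (nhds (∑ i ∈ Finset.univ.filter fun i => 1 < ‖μ i‖,
        Real.logb 2 (‖μ i‖))) :=
  rate_threshold_tendsto_general m μ hex
end

section
/- Let μ_1,…,μ_m be nonzero complex numbers with |μ_i| ≠ 1 for every i and |μ_i| > 1 for at least one i. For each positive integer n let a_{1,n},…,a_{m,n} be defined by ∏_{j=1}^m (z − μ_j^n) = z^m + a_{1,n} z^{m−1} + ⋯ + a_{m,n}. Then lim_{n→∞} (1/n)·log₂ max{ |a_{m,n}|·2^{m−1}, max_{1≤i≤m−1} |a_{i,n}|·2^i } = Σ_{i : |μ_i| > 1} log₂ |μ_i|. (That is, the Fujiwara-based upper bound on the minimal stabilizing rate R^f_n also converges to R*.) -/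
open Finset Filter Topology

section PowerProducts

variable {ι 𝕜 : Type*} [Fintype ι] [NormedField 𝕜] (z : ι → 𝕜)

theorem prod_max_norm_one_eq_prod_filter :
    ∏ j, max ‖z j‖ 1 = ∏ j ∈ univ.filter (fun j => 1 < ‖z j‖), ‖z j‖ := by
  rw [prod_filter]
  refine prod_congr rfl fun j _ => ?_
  split_ifs with h
  · exact max_eq_left h.le
  · exact max_eq_right (not_lt.mp h)

theorem norm_prod_pow_le_prod_max_norm_one (t : Finset ι) (n : ℕ) :
    ‖∏ j ∈ t, z j ^ n‖ ≤ (∏ j, max ‖z j‖ 1) ^ n := by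
  rw [norm_prod, ← prod_pow]
  calc ∏ j ∈ t, ‖z j ^ n‖ ≤ ∏ j ∈ t, max ‖z j‖ 1 ^ n :=
        prod_le_prod (fun _ _ => norm_nonneg _) fun j _ => by
          rw [norm_pow]; exact pow_le_pow_left₀ (norm_nonneg _) (le_max_left _ _) n
    _ ≤ ∏ j, max ‖z j‖ 1 ^ n :=
        prod_le_prod_of_subset_of_one_le (subset_univ t) (fun _ _ => by positivity)
          fun _ _ _ => one_le_pow₀ (le_max_right _ _)

theorem norm_prod_pow_le_of_mem {t : Finset ι} {i : ι} (hi : i ∈ t) (n : ℕ) :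
    ‖∏ j ∈ t, z j ^ n‖ ≤ ‖z i‖ ^ n * (∏ j, max ‖z j‖ 1) ^ n := by
  classical
  rw [← mul_prod_erase t _ hi, norm_mul, norm_pow]
  exact mul_le_mul_of_nonneg_left (norm_prod_pow_le_prod_max_norm_one z _ n) (by positivity)

theorem norm_sum_powersetCard_prod_pow_le (k n : ℕ) :
    ‖∑ t ∈ univ.powersetCard k, ∏ j ∈ t, z j ^ n‖ ≤
      2 ^ Fintype.card ι * (∏ j, max ‖z j‖ 1) ^ n :=
  calc ‖∑ t ∈ univ.powersetCard k, ∏ j ∈ t, z j ^ n‖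
      ≤ ∑ _t ∈ univ.powersetCard k, (∏ j, max ‖z j‖ 1) ^ n :=
        norm_sum_le_of_le _ fun t _ => norm_prod_pow_le_prod_max_norm_one z t n
    _ = (Fintype.card ι).choose k * (∏ j, max ‖z j‖ 1) ^ n := by
        simp [card_powersetCard]
    _ ≤ 2 ^ Fintype.card ι * (∏ j, max ‖z j‖ 1) ^ n := by
        gcongr; exact_mod_cast Nat.choose_le_two_pow _ _

theorem exists_forall_norm_le_of_norm_ne_one (hz : ∀ j, ‖z j‖ ≠ 1) :
    ∃ ρ : ℝ, 0 ≤ ρ ∧ ρ < 1 ∧ ∀ j, ‖z j‖ ≤ 1 → ‖z j‖ ≤ ρ := by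
  classical
  set S := univ.filter fun j => ‖z j‖ ≤ 1
  refine ⟨(S.sup (‖z ·‖₊) : NNReal), NNReal.coe_nonneg _, ?_, fun j hj => ?_⟩
  · refine NNReal.coe_lt_one.2 ((Finset.sup_lt_iff zero_lt_one).2 fun j hj => ?_)
    exact_mod_cast (mem_filter.1 hj).2.lt_of_ne (hz j)
  · exact_mod_cast le_sup (f := (‖z ·‖₊)) (mem_filter.2 ⟨mem_univ j, hj⟩ : j ∈ S)

theorem le_norm_sum_powersetCard_prod_pow {ρ : ℝ} (hρ0 : 0 ≤ ρ)
    (hρ : ∀ j, ‖z j‖ ≤ 1 → ‖z j‖ ≤ ρ) (n : ℕ) :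
    (1 - 2 ^ Fintype.card ι * ρ ^ n) * (∏ j, max ‖z j‖ 1) ^ n ≤
      ‖∑ t ∈ univ.powersetCard #(univ.filter fun j => 1 < ‖z j‖), ∏ j ∈ t, z j ^ n‖ := by
  classical
  set E := univ.filter fun j => 1 < ‖z j‖
  set M := ∏ j, max ‖z j‖ 1
  have hE : E ∈ univ.powersetCard #E := mem_powersetCard.2 ⟨subset_univ _, rfl⟩
  have hdominant : ‖∏ j ∈ E, z j ^ n‖ = M ^ n := by
    simp only [M, prod_max_norm_one_eq_prod_filter, norm_prod, norm_pow, prod_pow, E]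
  have hrest : ‖∑ t ∈ (univ.powersetCard #E).erase E, ∏ j ∈ t, z j ^ n‖ ≤
      2 ^ Fintype.card ι * ρ ^ n * M ^ n := by
    calc ‖∑ t ∈ (univ.powersetCard #E).erase E, ∏ j ∈ t, z j ^ n‖
        ≤ ∑ _t ∈ (univ.powersetCard #E).erase E, ρ ^ n * M ^ n := by
          refine norm_sum_le_of_le _ fun t ht => ?_
          obtain ⟨htE, ht⟩ := mem_erase.1 ht
          obtain ⟨i, hit, hiE⟩ : ∃ i ∈ t, i ∉ E := not_subset.1 fun hsub =>
            htE (eq_of_subset_of_card_le hsub (mem_powersetCard.1 ht).2.ge)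
          have hi : ‖z i‖ ≤ 1 := by simpa [E] using hiE
          calc ‖∏ j ∈ t, z j ^ n‖ ≤ ‖z i‖ ^ n * M ^ n := norm_prod_pow_le_of_mem z hit n
            _ ≤ ρ ^ n * M ^ n := by gcongr; exact hρ i hi
      _ = #((univ.powersetCard #E).erase E) * (ρ ^ n * M ^ n) := by
          rw [sum_const, nsmul_eq_mul]
      _ ≤ 2 ^ Fintype.card ι * (ρ ^ n * M ^ n) := by
          gcongr
          calc (#((univ.powersetCard #E).erase E) : ℝ) ≤ #(univ.powersetCard #E) := by
                exact_mod_cast card_le_card (erase_subset _ _)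
            _ ≤ 2 ^ Fintype.card ι := by
                rw [card_powersetCard, card_univ]; exact_mod_cast Nat.choose_le_two_pow _ _
      _ = 2 ^ Fintype.card ι * ρ ^ n * M ^ n := by ring
  rw [← add_sum_erase _ _ hE]
  calc (1 - 2 ^ Fintype.card ι * ρ ^ n) * M ^ n
      ≤ ‖∏ j ∈ E, z j ^ n‖ - ‖∑ t ∈ (univ.powersetCard #E).erase E, ∏ j ∈ t, z j ^ n‖ := by
        rw [hdominant]; linarith
    _ ≤ _ := norm_sub_le_norm_add _ _

theorem eventually_le_norm_sum_powersetCard_prod_pow (hz : ∀ j, ‖z j‖ ≠ 1) :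
    ∀ᶠ n in atTop, (∏ j, max ‖z j‖ 1) ^ n / 2 ≤
      ‖∑ t ∈ univ.powersetCard #(univ.filter fun j => 1 < ‖z j‖), ∏ j ∈ t, z j ^ n‖ := by
  obtain ⟨ρ, hρ0, hρ1, hρ⟩ := exists_forall_norm_le_of_norm_ne_one z hz
  have hsmall : ∀ᶠ n in atTop, 2 ^ Fintype.card ι * ρ ^ n ≤ (1 / 2 : ℝ) := by
    have := (tendsto_pow_atTop_nhds_zero_of_lt_one hρ0 hρ1).const_mul (2 ^ Fintype.card ι : ℝ)
    rw [mul_zero] at this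
    exact (this.eventually (gt_mem_nhds one_half_pos)).mono fun _ => le_of_lt
  filter_upwards [hsmall] with n hn
  refine le_trans ?_ (le_norm_sum_powersetCard_prod_pow z hρ0 hρ n)
  have : 0 ≤ (∏ j, max ‖z j‖ 1) ^ n := by positivity
  nlinarith

end PowerProducts

theorem norm_acoef (m : ℕ) (μ : Fin m → ℂ) {n i : ℕ} (hi : i ≤ m) :
    ‖acoef m μ n i‖ = ‖∑ t ∈ univ.powersetCard i, ∏ j ∈ t, μ j ^ n‖ := by
  have hcard : Multiset.card (univ.val.map fun j : Fin m => μ j ^ n) = m := by simp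
  have hprod : ∏ j : Fin m, (Polynomial.X - Polynomial.C (μ j ^ n)) =
      ((univ.val.map fun j : Fin m => μ j ^ n).map fun a => Polynomial.X - Polynomial.C a).prod := by
    rw [Multiset.map_map]; rfl
  rw [acoef, hprod, Multiset.prod_X_sub_C_coeff _ (by rw [hcard]; exact Nat.sub_le m i), hcard,
    Nat.sub_sub_self hi, esymm_map_val, norm_mul, norm_pow, norm_neg, norm_one, one_pow, one_mul]

noncomputable def fujiwaraMax (m : ℕ) (a : ℕ → ℝ) (h : (univ : Finset (Fin m)).Nonempty) : ℝ :=
  univ.sup' h fun i : Fin m => if (i : ℕ) + 1 = m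
    then a m * 2 ^ (m - 1)
    else a ((i : ℕ) + 1) * 2 ^ ((i : ℕ) + 1)

theorem le_fujiwaraMax {m k : ℕ} (a : ℕ → ℝ) (h : (univ : Finset (Fin m)).Nonempty)
    (hk0 : 1 ≤ k) (hkm : k ≤ m) (ha : 0 ≤ a k) : a k ≤ fujiwaraMax m a h := by
  refine le_trans ?_ (le_sup' _ (mem_univ (⟨k - 1, by omega⟩ : Fin m)))
  dsimp only
  split_ifs with hlast
  · obtain rfl : k = m := by omega
    exact le_mul_of_one_le_right ha (one_le_pow₀ one_le_two)
  · rw [Nat.sub_add_cancel hk0]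
    exact le_mul_of_one_le_right ha (one_le_pow₀ one_le_two)

theorem fujiwaraMax_le {m : ℕ} {a : ℕ → ℝ} (h : (univ : Finset (Fin m)).Nonempty) {B : ℝ}
    (hB0 : 0 ≤ B) (hB : ∀ p ≤ m, a p ≤ B) : fujiwaraMax m a h ≤ 2 ^ m * B := by
  have hweighted : ∀ p q, p ≤ m → q ≤ m → a p * 2 ^ q ≤ 2 ^ m * B := fun p q hp hq =>
    calc a p * 2 ^ q ≤ B * 2 ^ m :=
          mul_le_mul (hB p hp) (pow_le_pow_right₀ one_le_two hq) (by positivity) hB0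
      _ = 2 ^ m * B := mul_comm _ _
  refine sup'_le _ _ fun i _ => ?_
  split_ifs
  · exact hweighted m (m - 1) le_rfl (Nat.sub_le m 1)
  · exact hweighted _ _ i.isLt i.isLt

theorem tendsto_inv_mul_logb_of_le_of_le {b x c C : ℝ} {s : ℕ → ℝ} (hb : 1 < b) (hx : 0 < x)
    (hc : 0 < c) (hlow : ∀ᶠ n in atTop, c * x ^ n ≤ s n) (hup : ∀ᶠ n in atTop, s n ≤ C * x ^ n) :
    Tendsto (fun n : ℕ => 1 / (n : ℝ) * Real.logb b (s n)) atTop (𝓝 (Real.logb b x)) := by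
  have hC : 0 < C := by
    obtain ⟨n, hn_low, hn_up⟩ := (hlow.and hup).exists
    exact hc.trans_le (le_of_mul_le_mul_right (hn_low.trans hn_up) (pow_pos hx n))
  have hlogb : ∀ {d : ℝ}, 0 < d → ∀ n : ℕ, 0 < n →
      1 / (n : ℝ) * Real.logb b (d * x ^ n) = Real.logb b d / n + Real.logb b x := by
    intro d hd n hn
    rw [Real.logb_mul hd.ne' (pow_pos hx n).ne', Real.logb_pow]
    field_simp
  have hlim : ∀ d : ℝ, Tendsto (fun n : ℕ => Real.logb b d / n + Real.logb b x) atTop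
      (𝓝 (Real.logb b x)) := fun d => by
    simpa using (tendsto_const_div_atTop_nhds_zero_nat (Real.logb b d)).add_const (Real.logb b x)
  refine tendsto_of_tendsto_of_tendsto_of_le_of_le' (hlim c) (hlim C) ?_ ?_
  · filter_upwards [hlow, eventually_gt_atTop 0] with n hn hn0
    rw [← hlogb hc n hn0]
    gcongr
  · filter_upwards [hlow, hup, eventually_gt_atTop 0] with n hn_low hn_up hn0
    rw [← hlogb hC n hn0]
    gcongr
    exact (mul_pos hc (pow_pos hx n)).trans_le hn_low

theorem fujiwara_rate_bound_tendsto_general (m : ℕ) (μ : Fin m → ℂ)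
    (hμ1 : ∀ i, ‖μ i‖ ≠ 1)
    (hex : ∃ i, 1 < ‖μ i‖) :
    Filter.Tendsto
      (fun n : ℕ => (1 / (n : ℝ)) * Real.logb 2
        (Finset.univ.sup' (Finset.univ_nonempty_iff.mpr hex.nonempty)
          (fun i : Fin m => if (i : ℕ) + 1 = m
            then ‖acoef m μ n m‖ * 2 ^ (m - 1)
            else ‖acoef m μ n ((i : ℕ) + 1)‖ * 2 ^ ((i : ℕ) + 1))))
      Filter.atTop
      (nhds (∑ i ∈ Finset.univ.filter fun i => 1 < ‖μ i‖,
        Real.logb 2 (‖μ i‖))) := by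
  change Tendsto (fun n : ℕ => 1 / (n : ℝ) *
    Real.logb 2 (fujiwaraMax m (fun i => ‖acoef m μ n i‖) _)) atTop _
  have hlogM : Real.logb 2 (∏ j, max ‖μ j‖ 1) =
      ∑ i ∈ univ.filter fun i => 1 < ‖μ i‖, Real.logb 2 ‖μ i‖ := by
    rw [prod_max_norm_one_eq_prod_filter, Real.logb_prod]
    exact fun i hi => (zero_lt_one.trans (mem_filter.1 hi).2).ne'
  set E := univ.filter fun i => 1 < ‖μ i‖
  set M := ∏ j, max ‖μ j‖ 1
  have hM : 0 < M := prod_pos fun j _ => zero_lt_one.trans_le (le_max_right _ _)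
  obtain ⟨i₀, hi₀⟩ := hex
  have hE : 1 ≤ #E := card_pos.2 ⟨i₀, mem_filter.2 ⟨mem_univ _, hi₀⟩⟩
  have hEm : #E ≤ m := (card_le_univ E).trans_eq (Fintype.card_fin m)
  rw [← hlogM]
  refine tendsto_inv_mul_logb_of_le_of_le (c := 1 / 2) (C := 2 ^ m * 2 ^ m) one_lt_two hM
    one_half_pos ?_ (Eventually.of_forall fun n => ?_)
  · filter_upwards [eventually_le_norm_sum_powersetCard_prod_pow μ hμ1] with n hn
    rw [← norm_acoef m μ hEm] at hn
    exact (by linarith : 1 / 2 * M ^ n ≤ _).trans (le_fujiwaraMax _ _ hE hEm (norm_nonneg _))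
  · refine (fujiwaraMax_le _ (by positivity) fun p hp => ?_).trans_eq (mul_assoc _ _ _).symm
    rw [norm_acoef m μ hp]
    simpa using norm_sum_powersetCard_prod_pow_le μ p n

/-- If `|μ_i| ≠ 1` for all `i` and `|μ_i| > 1` for some `i`, then
`(1/n) log₂ max{|a_{m,n}| 2^{m-1}, max_{1 ≤ i ≤ m-1} |a_{i,n}| 2^i}`
converges to `Σ_{i:|μ_i|>1} log₂ |μ_i|`; that is, the Fujiwara-based upper bound on
the minimal stabilizing rate `R^f_n` also converges to `R*`. -/
theorem fujiwara_rate_bound_tendsto (m : ℕ) (μ : Fin m → ℂ)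
    (hμ0 : ∀ i, μ i ≠ 0) (hμ1 : ∀ i, ‖μ i‖ ≠ 1)
    (hex : ∃ i, 1 < ‖μ i‖) :
    Filter.Tendsto
      (fun n : ℕ => (1 / (n : ℝ)) * Real.logb 2
        (Finset.univ.sup' (Finset.univ_nonempty_iff.mpr hex.nonempty)
          (fun i : Fin m => if (i : ℕ) + 1 = m
            then ‖acoef m μ n m‖ * 2 ^ (m - 1)
            else ‖acoef m μ n ((i : ℕ) + 1)‖ * 2 ^ ((i : ℕ) + 1))))
      Filter.atTop
      (nhds (∑ i ∈ Finset.univ.filter fun i => 1 < ‖μ i‖,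
        Real.logb 2 (‖μ i‖))) :=
  fujiwara_rate_bound_tendsto_general m μ hμ1 hex
end

section
/- Let m ≥ 1, let P be an m×m real symmetric positive definite matrix, let F be an invertible m×m real matrix, let x̂ ∈ ℝ^m, let W ≥ 0 and ε > 0. Define S = (1+ε)·F P Fᵀ + (1 + 1/ε)·(m W²/4)·I_m. Then S is symmetric positive definite, and for every x ∈ ℝ^m with (x − x̂)ᵀ P⁻¹ (x − x̂) ≤ 1 and every w ∈ ℝ^m with ‖w‖_∞ ≤ W/2, the point y = Fx + w satisfies (y − F x̂)ᵀ S⁻¹ (y − F x̂) ≤ 1. -/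
/-!
Describe ellipsoids through their support functions: `z` lies in the ellipsoid of shape `A` iff
`(cᵀz)² ≤ cᵀAc` for every direction `c`. For positive definite `A` this is equivalent to
`zᵀA⁻¹z ≤ 1` by the Cauchy–Schwarz inequality for the form `A` (take `c = A⁻¹z` for the
converse). In this form the image of `E(P)` under `F` lies in `E(F P Fᵀ)`, a vector with
`‖w‖_∞ ≤ W/2` lies in `E((m W²/4) I)`, and `(u + v)² ≤ (1+ε)u² + (1+1/ε)v²` shows that the
Minkowski sum `E(A) + E(B)` lies in `E((1+ε)A + (1+1/ε)B)`.
-/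

open Matrix

theorem add_sq_le_of_sq_le {ε u v a b : ℝ} (hε : 0 < ε) (hu : u ^ 2 ≤ a) (hv : v ^ 2 ≤ b) :
    (u + v) ^ 2 ≤ (1 + ε) * a + (1 + 1 / ε) * b := by
  have key : (u + v) ^ 2 + (ε * u - v) ^ 2 / ε = (1 + ε) * u ^ 2 + (1 + 1 / ε) * v ^ 2 := by
    field_simp
    ring
  calc (u + v) ^ 2 ≤ (1 + ε) * u ^ 2 + (1 + 1 / ε) * v ^ 2 := by
        rw [← key]; exact le_add_of_nonneg_right (by positivity)
    _ ≤ (1 + ε) * a + (1 + 1 / ε) * b := by gcongr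

theorem dotProduct_self_le_card_mul_sq {n : Type*} [Fintype n] {w : n → ℝ} {r : ℝ}
    (hw : ∀ i, |w i| ≤ r) : w ⬝ᵥ w ≤ Fintype.card n * r ^ 2 := by
  calc w ⬝ᵥ w = ∑ i, |w i| ^ 2 := by simp [dotProduct, sq]
    _ ≤ ∑ _i : n, r ^ 2 := Finset.sum_le_sum fun i _ => pow_le_pow_left₀ (abs_nonneg _) (hw i) 2
    _ = Fintype.card n * r ^ 2 := by simp

namespace Matrix

variable {n : Type*} [Fintype n]

theorem PosSemidef.sq_dotProduct_mulVec_le {A : Matrix n n ℝ} (hA : A.PosSemidef) (x y : n → ℝ) :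
    (x ⬝ᵥ A *ᵥ y) ^ 2 ≤ (x ⬝ᵥ A *ᵥ x) * (y ⬝ᵥ A *ᵥ y) := by
  classical
  have hsymm : y ⬝ᵥ A *ᵥ x = x ⬝ᵥ A *ᵥ y := by
    rw [dotProduct_comm, dotProduct_mulVec, ← mulVec_transpose,
      ← conjTranspose_eq_transpose_of_trivial, hA.1.eq]
  have h := LinearMap.BilinForm.apply_mul_apply_le_of_forall_zero_le (toLinearMap₂' ℝ A)
    (fun v => by simpa [toLinearMap₂'_apply'] using hA.dotProduct_mulVec_nonneg v) x y
  simp only [toLinearMap₂'_apply', hsymm] at h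
  rwa [sq]

theorem PosDef.sq_dotProduct_le [DecidableEq n] {P : Matrix n n ℝ} (hP : P.PosDef) (c d : n → ℝ) :
    (c ⬝ᵥ d) ^ 2 ≤ (c ⬝ᵥ P *ᵥ c) * (d ⬝ᵥ P⁻¹ *ᵥ d) := by
  have hPP : P *ᵥ P⁻¹ *ᵥ d = d := by
    rw [mulVec_mulVec, mul_nonsing_inv _ ((isUnit_iff_isUnit_det P).mp hP.isUnit), one_mulVec]
  simpa [hPP, dotProduct_comm (P⁻¹ *ᵥ d) d] using hP.posSemidef.sq_dotProduct_mulVec_le c (P⁻¹ *ᵥ d)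

/-- The ellipsoid of shape `A` centred at the origin, in support-function form. Unlike
`{z | zᵀ A⁻¹ z ≤ 1}` it is meaningful for singular `A`, such as the noise shape `(m W²/4) I`
with `W = 0`. -/
def ellipsoid (A : Matrix n n ℝ) : Set (n → ℝ) :=
  {z | ∀ c, (c ⬝ᵥ z) ^ 2 ≤ c ⬝ᵥ A *ᵥ c}

theorem PosDef.mem_ellipsoid_iff [DecidableEq n] {S : Matrix n n ℝ} (hS : S.PosDef)
    (z : n → ℝ) : z ∈ S.ellipsoid ↔ z ⬝ᵥ S⁻¹ *ᵥ z ≤ 1 := by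
  refine ⟨fun h => ?_, fun hz c => ?_⟩
  · have hSS : S *ᵥ S⁻¹ *ᵥ z = z := by
      rw [mulVec_mulVec, mul_nonsing_inv _ ((isUnit_iff_isUnit_det S).mp hS.isUnit), one_mulVec]
    have ht := h (S⁻¹ *ᵥ z)
    rw [hSS, dotProduct_comm] at ht
    nlinarith
  · calc (c ⬝ᵥ z) ^ 2 ≤ (c ⬝ᵥ S *ᵥ c) * (z ⬝ᵥ S⁻¹ *ᵥ z) := hS.sq_dotProduct_le c z
      _ ≤ c ⬝ᵥ S *ᵥ c := mul_le_of_le_one_right (hS.posSemidef.dotProduct_mulVec_nonneg c) hz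

theorem mulVec_mem_ellipsoid {m : Type*} [Fintype m] {P : Matrix n n ℝ} {d : n → ℝ}
    (hd : d ∈ P.ellipsoid) (F : Matrix m n ℝ) : F *ᵥ d ∈ (F * P * Fᵀ).ellipsoid := by
  intro c
  rw [dotProduct_mulVec, ← mulVec_transpose, ← mulVec_mulVec, ← mulVec_mulVec,
    dotProduct_mulVec c F, ← mulVec_transpose]
  exact hd (Fᵀ *ᵥ c)

theorem smul_one_mem_ellipsoid [DecidableEq n] {w : n → ℝ} {r : ℝ} (hw : w ⬝ᵥ w ≤ r) :
    w ∈ (r • (1 : Matrix n n ℝ)).ellipsoid := by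
  intro c
  calc (c ⬝ᵥ w) ^ 2 ≤ (c ⬝ᵥ c) * (w ⬝ᵥ w) := by
        simpa using PosSemidef.one.sq_dotProduct_mulVec_le c w
    _ ≤ (c ⬝ᵥ c) * r := mul_le_mul_of_nonneg_left hw (dotProduct_self_star_nonneg c)
    _ = c ⬝ᵥ (r • (1 : Matrix n n ℝ)) *ᵥ c := by
        rw [smul_mulVec, one_mulVec, dotProduct_smul, smul_eq_mul, mul_comm]

theorem add_mem_ellipsoid {A B : Matrix n n ℝ} {u v : n → ℝ} (hu : u ∈ A.ellipsoid)
    (hv : v ∈ B.ellipsoid) {ε : ℝ} (hε : 0 < ε) :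
    u + v ∈ ((1 + ε) • A + (1 + 1 / ε) • B).ellipsoid := by
  intro c
  rw [dotProduct_add, add_mulVec, dotProduct_add, smul_mulVec, smul_mulVec, dotProduct_smul,
    dotProduct_smul, smul_eq_mul, smul_eq_mul]
  exact add_sq_le_of_sq_le hε (hu c) (hv c)

end Matrix

theorem ellipsoid_time_update_general (m : ℕ)
    (P F : Matrix (Fin m) (Fin m) ℝ) (hP : P.PosDef) (hF : IsUnit F.det)
    (xhat : Fin m → ℝ) (W ε : ℝ) (hε : 0 < ε)
    (S : Matrix (Fin m) (Fin m) ℝ)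
    (hS : S = (1 + ε) • (F * P * Fᵀ)
      + ((1 + 1 / ε) * ((m : ℝ) * W ^ 2 / 4)) • (1 : Matrix (Fin m) (Fin m) ℝ)) :
    S.PosDef ∧
      ∀ x w : Fin m → ℝ,
        (x - xhat) ⬝ᵥ (P⁻¹ *ᵥ (x - xhat)) ≤ 1 →
        (∀ i, |w i| ≤ W / 2) →
        ((F *ᵥ x + w) - F *ᵥ xhat) ⬝ᵥ (S⁻¹ *ᵥ ((F *ᵥ x + w) - F *ᵥ xhat)) ≤ 1 := by
  have hFPF : (F * P * Fᵀ).PosDef := by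
    simpa [conjTranspose_eq_transpose_of_trivial] using hP.mul_mul_conjTranspose_same
      (vecMul_injective_iff_isUnit.mpr ((isUnit_iff_isUnit_det F).mpr hF))
  have hSpos : S.PosDef :=
    hS ▸ (hFPF.smul (by positivity)).add_posSemidef (PosSemidef.one.smul (by positivity))
  refine ⟨hSpos, fun x w hx hw => ?_⟩
  have hd : x - xhat ∈ P.ellipsoid := (hP.mem_ellipsoid_iff _).mpr hx
  have hwE : w ∈ (((m : ℝ) * W ^ 2 / 4) • (1 : Matrix (Fin m) (Fin m) ℝ)).ellipsoid := by
    refine smul_one_mem_ellipsoid ((dotProduct_self_le_card_mul_sq hw).trans_eq ?_)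
    rw [Fintype.card_fin]
    ring
  rw [← hSpos.mem_ellipsoid_iff, hS, ← smul_smul, add_sub_right_comm, ← mulVec_sub]
  exact add_mem_ellipsoid (mulVec_mem_ellipsoid hd F) hwE hε

/-- time update of the ellipsoidal filter.
With `S = (1+ε) F P Fᵀ + (1 + 1/ε)(m W²/4) I`, the matrix `S` is symmetric positive
definite, and for every `x` in the ellipsoid `E(P, x̂)` and every `w` with
`‖w‖_∞ ≤ W/2`, the point `y = Fx + w` lies in the ellipsoid `E(S, F x̂)`. -/
theorem ellipsoid_time_update (m : ℕ) (hm : 1 ≤ m)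
    (P F : Matrix (Fin m) (Fin m) ℝ) (hP : P.PosDef) (hF : IsUnit F.det)
    (xhat : Fin m → ℝ) (W ε : ℝ) (hW : 0 ≤ W) (hε : 0 < ε)
    (S : Matrix (Fin m) (Fin m) ℝ)
    (hS : S = (1 + ε) • (F * P * Fᵀ)
      + ((1 + 1 / ε) * ((m : ℝ) * W ^ 2 / 4)) • (1 : Matrix (Fin m) (Fin m) ℝ)) :
    S.PosDef ∧
      ∀ x w : Fin m → ℝ,
        (x - xhat) ⬝ᵥ (P⁻¹ *ᵥ (x - xhat)) ≤ 1 →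
        (∀ i, |w i| ≤ W / 2) →
        ((F *ᵥ x + w) - F *ᵥ xhat) ⬝ᵥ (S⁻¹ *ᵥ ((F *ᵥ x + w) - F *ᵥ xhat)) ≤ 1 :=
  ellipsoid_time_update_general m P F hP hF xhat W ε hε S hS
end
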